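/- Let $\Theta\subseteq\mathbb{R}^d$ be convex, let $\theta^\star\in\Theta$, and let $M:\Theta\to\Theta$ be a map. Suppose: (i) for each $\theta$, $Q(\cdot\mid\theta):\Theta\to\mathbb{R}$ is differentiable, $Q(\cdot\mid\theta^\star)$ is $\lambda$-strongly convex on a ball $B=\{\theta:\|\theta-\theta^\star\|\le r\}$; (ii) first-order optimality holds: $\langle\nabla_1 Q(\theta^\star\mid\theta^\star),\,\theta-\theta^\star\rangle\ge 0$ and $\langle\nabla_1 Q(M(\theta)\mid\theta),\,\theta'-M(\theta)\rangle\ge 0$ for all $\theta,\theta'\in\Theta$; (iii) first-order stability holds: $\|\nabla_1 Q(M(\theta)\mid\theta^\star)-\nabla_1 Q(M(\theta)\mid\theta)\| \le \gamma\|\theta-\theta^\star\|$ for all $\theta\in B$, where $0<\gamma<\lambda$. Then $\|M(\theta)-\theta^\star\| \le (\gamma/\lambda)\|\theta-\theta^\star\|$ for all $\theta\in B$ with $M(\theta)\in B$. -/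

import Mathlib

open RealInnerProductSpace

/-! Adding the strong-convexity inequality for the pairs `(M θ, θ⋆)` and `(θ⋆, M θ)` makes the
gradient of `Q(·|θ⋆)` `λ`-strongly monotone. Testing the optimality conditions of `θ⋆` and of
`M θ` against each other then bounds `λ‖M θ - θ⋆‖²` by the inner product of the gradient gap
`∇₁Q(M θ|θ⋆) - ∇₁Q(M θ|θ)` with `M θ - θ⋆`, and Cauchy–Schwarz with first-order stability
leaves `λ‖M θ - θ⋆‖² ≤ γ‖θ - θ⋆‖‖M θ - θ⋆‖`. -/

section

variable {E : Type*} [NormedAddCommGroup E] [InnerProductSpace ℝ E]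

lemma mul_norm_sq_le_inner_sub_of_strongConvexity {f : E → ℝ} {g : E → E} {lam : ℝ} {x y : E}
    (hxy : lam / 2 * ‖x - y‖ ^ 2 ≤ f x - f y - ⟪g y, x - y⟫)
    (hyx : lam / 2 * ‖y - x‖ ^ 2 ≤ f y - f x - ⟪g x, y - x⟫) :
    lam * ‖x - y‖ ^ 2 ≤ ⟪g x - g y, x - y⟫ := by
  rw [norm_sub_rev y x, ← neg_sub x y, inner_neg_right] at hyx
  rw [inner_sub_left]
  linarith

lemma mul_norm_sq_le_inner_of_variationalIneq {u v w a b : E} {lam : ℝ}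
    (hmono : lam * ‖a - b‖ ^ 2 ≤ ⟪u - v, a - b⟫)
    (hv : 0 ≤ ⟪v, a - b⟫) (hw : 0 ≤ ⟪w, b - a⟫) :
    lam * ‖a - b‖ ^ 2 ≤ ⟪u - w, a - b⟫ := by
  rw [← neg_sub a b, inner_neg_right] at hw
  rw [inner_sub_left] at hmono ⊢
  linarith

end

lemma le_div_mul_of_mul_sq_le_mul {lam gam s t : ℝ} (hlam : 0 < lam) (hgam : 0 ≤ gam)
    (hs : 0 ≤ s) (ht : 0 ≤ t) (h : lam * t ^ 2 ≤ gam * s * t) :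
    t ≤ gam / lam * s := by
  rw [div_mul_eq_mul_div, le_div_iff₀ hlam]
  rcases ht.eq_or_lt with rfl | ht
  · simpa using mul_nonneg hgam hs
  · nlinarith

theorem stmt6_general {E : Type*} [NormedAddCommGroup E] [InnerProductSpace ℝ E]
    (Θ : Set E) (θstar : E) (hθstar : θstar ∈ Θ)
    (M : E → E) (hM : ∀ θ ∈ Θ, M θ ∈ Θ)
    (Q : E → E → ℝ) (g1 : E → E → E) (r lam gam : ℝ)
    (hball : ∀ θ : E, ‖θ - θstar‖ ≤ r → θ ∈ Θ)
    (hsc : ∀ θ1 : E, ‖θ1 - θstar‖ ≤ r → ∀ θ2 : E, ‖θ2 - θstar‖ ≤ r →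
      lam / 2 * ‖θ1 - θ2‖ ^ 2 ≤ Q θ1 θstar - Q θ2 θstar - ⟪g1 θ2 θstar, θ1 - θ2⟫)
    (hopt1 : ∀ θ ∈ Θ, 0 ≤ ⟪g1 θstar θstar, θ - θstar⟫)
    (hopt2 : ∀ θ ∈ Θ, ∀ θ' ∈ Θ, 0 ≤ ⟪g1 (M θ) θ, θ' - M θ⟫)
    (hfos : ∀ θ : E, ‖θ - θstar‖ ≤ r →
      ‖g1 (M θ) θstar - g1 (M θ) θ‖ ≤ gam * ‖θ - θstar‖)
    (hgam : 0 < gam) (hgl : gam < lam) :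
    ∀ θ : E, ‖θ - θstar‖ ≤ r → ‖M θ - θstar‖ ≤ r →
      ‖M θ - θstar‖ ≤ gam / lam * ‖θ - θstar‖ := by
  intro θ hθ hMθ
  have hθΘ : θ ∈ Θ := hball θ hθ
  have hstar : ‖θstar - θstar‖ ≤ r := by simpa using (norm_nonneg _).trans hθ
  have hmono := mul_norm_sq_le_inner_sub_of_strongConvexity (f := fun x => Q x θstar)
    (g := fun x => g1 x θstar) (hsc (M θ) hMθ θstar hstar) (hsc θstar hstar (M θ) hMθ)
  have hgap := mul_norm_sq_le_inner_of_variationalIneq hmono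
    (hopt1 (M θ) (hM θ hθΘ)) (hopt2 θ hθΘ θstar hθstar)
  refine le_div_mul_of_mul_sq_le_mul (hgam.trans hgl) hgam.le
    (norm_nonneg _) (norm_nonneg _) ?_
  calc lam * ‖M θ - θstar‖ ^ 2
      ≤ ⟪g1 (M θ) θstar - g1 (M θ) θ, M θ - θstar⟫ := hgap
    _ ≤ ‖g1 (M θ) θstar - g1 (M θ) θ‖ * ‖M θ - θstar‖ := real_inner_le_norm _ _
    _ ≤ gam * ‖θ - θstar‖ * ‖M θ - θstar‖ := by gcongr; exact hfos θ hθ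

/-- Contractivity of the population DM operator (Theorem 1). Under
strong convexity of `Q(·|θ⋆)` on the ball, first-order optimality of the updates, and
first-order stability with constant `γ < λ`, the DM map `M` is `(γ/λ)`-contractive
towards `θ⋆` on the ball. Here `g1 η θ` is the gradient of `Q(·|θ)` at `η`. -/
theorem stmt6 {E : Type*} [NormedAddCommGroup E] [InnerProductSpace ℝ E] [CompleteSpace E]
    (Θ : Set E) (hΘ : Convex ℝ Θ) (θstar : E) (hθstar : θstar ∈ Θ)
    (M : E → E) (hM : ∀ θ ∈ Θ, M θ ∈ Θ)
    (Q : E → E → ℝ) (g1 : E → E → E) (r lam gam : ℝ) (hr : 0 < r)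
    (hball : ∀ θ : E, ‖θ - θstar‖ ≤ r → θ ∈ Θ)
    (hgrad : ∀ θ η : E, HasGradientAt (fun x => Q x θ) (g1 η θ) η)
    (hsc : ∀ θ1 : E, ‖θ1 - θstar‖ ≤ r → ∀ θ2 : E, ‖θ2 - θstar‖ ≤ r →
      lam / 2 * ‖θ1 - θ2‖ ^ 2 ≤ Q θ1 θstar - Q θ2 θstar - ⟪g1 θ2 θstar, θ1 - θ2⟫)
    (hopt1 : ∀ θ ∈ Θ, 0 ≤ ⟪g1 θstar θstar, θ - θstar⟫)
    (hopt2 : ∀ θ ∈ Θ, ∀ θ' ∈ Θ, 0 ≤ ⟪g1 (M θ) θ, θ' - M θ⟫)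
    (hfos : ∀ θ : E, ‖θ - θstar‖ ≤ r →
      ‖g1 (M θ) θstar - g1 (M θ) θ‖ ≤ gam * ‖θ - θstar‖)
    (hgam : 0 < gam) (hgl : gam < lam) :
    ∀ θ : E, ‖θ - θstar‖ ≤ r → ‖M θ - θstar‖ ≤ r →
      ‖M θ - θstar‖ ≤ gam / lam * ‖θ - θstar‖ :=
  stmt6_general Θ θstar hθstar M hM Q g1 r lam gam hball hsc hopt1 hopt2 hfos hgam hgl
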